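/- A rule R satisfies scale invariance, downstream impartiality, upstream invariance, and balance if and only if R is the Shapley rule R^Sh, given by R^Sh_i(e) = Σ_{j≤i} e_j/(n-j+1). -/

import Mathlib

open Finset

/-- Nonnegative inflow profile: the domain `ℝ^n_+`. -/
def Nonneg (n : ℕ) (e : Fin n → ℝ) : Prop := ∀ i, 0 ≤ e i

/-- A rule maps each inflow profile to a nonnegative, feasible, non-wasteful allocation. -/
def IsRule (n : ℕ) (R : (Fin n → ℝ) → (Fin n → ℝ)) : Prop :=
  ∀ e : Fin n → ℝ, Nonneg n e →
    (∀ i, 0 ≤ R e i) ∧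
    (∀ k : Fin n, ∑ i ∈ Finset.Iic k, R e i ≤ ∑ i ∈ Finset.Iic k, e i) ∧
    (∑ i, R e i = ∑ i, e i)

/-- Scale invariance. -/
def ScaleInvariant (n : ℕ) (R : (Fin n → ℝ) → (Fin n → ℝ)) : Prop :=
  ∀ e : Fin n → ℝ, Nonneg n e → ∀ γ : ℝ, 0 ≤ γ →
    ∀ i, R (fun j => γ * e j) i = γ * R e i

/-- Upstream invariance. -/
def UpstreamInvariant (n : ℕ) (R : (Fin n → ℝ) → (Fin n → ℝ)) : Prop :=
  ∀ e e' : Fin n → ℝ, Nonneg n e → Nonneg n e' →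
    ∀ i : Fin n, e i < e' i → (∀ j, j ≠ i → e j = e' j) →
      ∀ k, k < i → R e k = R e' k

/-- Downstream impartiality. -/
def DownstreamImpartial (n : ℕ) (R : (Fin n → ℝ) → (Fin n → ℝ)) : Prop :=
  ∀ e e' : Fin n → ℝ, Nonneg n e → Nonneg n e' →
    ∀ i : Fin n, e i < e' i → (∀ j, j ≠ i → e j = e' j) →
      (∀ k l, i < k → i < l → e k = e l) →
      ∀ k l, i < k → i < l → R e' k - R e k = R e' l - R e l

/-- Order preservation. -/
def OrderPreserving (n : ℕ) (R : (Fin n → ℝ) → (Fin n → ℝ)) : Prop :=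
  ∀ e : Fin n → ℝ, Nonneg n e → ∀ i j : Fin n, i < j → e j ≤ e i → R e j ≤ R e i

/-- Balance: when a single agent `i` (not the last one) has the only positive inflow,
`i` receives the average of the amounts received by the strictly downstream agents. -/
def IsBalanced (n : ℕ) (R : (Fin n → ℝ) → (Fin n → ℝ)) : Prop :=
  ∀ e : Fin n → ℝ, Nonneg n e → ∀ i : Fin n, (i : ℕ) < n - 1 → 0 < e i →
    (∀ j, j ≠ i → e j = 0) →
    R e i = (1 / ((n : ℝ) - 1 - (i : ℕ))) * ∑ k ∈ Finset.Ioi i, R e k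

/-- Progressivity. -/
def Progressive (n : ℕ) (R : (Fin n → ℝ) → (Fin n → ℝ)) : Prop :=
  ∀ e : Fin n → ℝ, Nonneg n e → ∀ i : Fin n, (i : ℕ) < n - 1 → 0 < e i →
    (∀ j, j ≠ i → e j = 0) →
    R e i ≤ (1 / ((n : ℝ) - 1 - (i : ℕ))) * ∑ k ∈ Finset.Ioi i, R e k

/-- Regressivity. -/
def Regressive (n : ℕ) (R : (Fin n → ℝ) → (Fin n → ℝ)) : Prop :=
  ∀ e : Fin n → ℝ, Nonneg n e → ∀ i : Fin n, (i : ℕ) < n - 1 → 0 < e i →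
    (∀ j, j ≠ i → e j = 0) →
    R e i ≥ (1 / ((n : ℝ) - 1 - (i : ℕ))) * ∑ k ∈ Finset.Ioi i, R e k

/-- Equal treatment of equal source inflows: here `s` (resp. `s'`) is the source of `e`
(resp. `e'`), i.e. the smallest index among the first `n-1` agents with positive inflow. -/
def EqualTreatmentOfEqualSourceInflows (n : ℕ) (R : (Fin n → ℝ) → (Fin n → ℝ)) : Prop :=
  ∀ e e' : Fin n → ℝ, Nonneg n e → Nonneg n e' →
    ∀ s s' : Fin n, (s : ℕ) < n - 1 → (s' : ℕ) < n - 1 →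
      0 < e s → 0 < e' s' →
      (∀ j, j < s → e j = 0) → (∀ j, j < s' → e' j = 0) →
      e s = e' s' → R e s = R e' s'

/-- Equal treatment of equal upstream total inflow. -/
def EqualTreatmentOfEqualUpstreamTotalInflow (n : ℕ) (R : (Fin n → ℝ) → (Fin n → ℝ)) : Prop :=
  ∀ e e' : Fin n → ℝ, Nonneg n e → Nonneg n e' →
    ∀ i : Fin n, e i = e' i →
      (∑ j ∈ Finset.Iio i, e j) = (∑ j ∈ Finset.Iio i, e' j) →
      R e i = R e' i

/-- The Shapley rule: `R^Sh_i(e) = Σ_{j ≤ i} e_j / (n - j + 1)` (with 1-based indices). -/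
noncomputable def Sh (n : ℕ) (e : Fin n → ℝ) (i : Fin n) : ℝ :=
  ∑ j ∈ Finset.Iic i, e j / ((n : ℝ) - (j : ℕ))

/-- The no-transfer rule. -/
def NT (n : ℕ) (e : Fin n → ℝ) (i : Fin n) : ℝ := e i

/-- The egalitarian full-transfer rule: `R^EFT_i(e) = Σ_{j < i} e_j / (n - j)` for `i < n`,
and the last agent additionally keeps her own inflow. -/
noncomputable def EFT (n : ℕ) (e : Fin n → ℝ) (i : Fin n) : ℝ :=
  (∑ j ∈ Finset.Iio i, e j / ((n : ℝ) - 1 - (j : ℕ))) +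
    (if (i : ℕ) = n - 1 then e i else 0)

/-- The egalitarian partial-transfer rule:
`R^EPT_i(e) = [1 - (n - i)/(n - 1)] e_i + (1/(n-1)) Σ_{k < i} e_k` (1-based indices). -/
noncomputable def EPT (n : ℕ) (e : Fin n → ℝ) (i : Fin n) : ℝ :=
  (1 - ((n : ℝ) - 1 - (i : ℕ)) / ((n : ℝ) - 1)) * e i +
    (1 / ((n : ℝ) - 1)) * ∑ j ∈ Finset.Iio i, e j

/-- The rule `R^α`: agent `k` keeps a fraction `α k` of her inflow and transfers the
rest equally among the agents strictly downstream. -/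
noncomputable def Ralpha (n : ℕ) (α : Fin n → ℝ) (e : Fin n → ℝ) (i : Fin n) : ℝ :=
  α i * e i + ∑ k ∈ Finset.Iio i, (1 - α k) * e k / ((n : ℝ) - 1 - (k : ℕ))

/-- Admissible parameter vectors: `α ∈ [0,1]^{n-1}` extended by `α_n = 1`. -/
def AlphaOK (n : ℕ) (α : Fin n → ℝ) : Prop :=
  (∀ i, 0 ≤ α i ∧ α i ≤ 1) ∧ (∀ i : Fin n, (i : ℕ) = n - 1 → α i = 1)

/-!
A rule satisfying the axioms is pinned down one unilateral change at a time. If `e` and `g`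
differ only at agent `j` and are constant downstream of `j`, upstream invariance fixes the
agents before `j`, downstream impartiality gives all agents after `j` a common increment `d`,
and non-wastefulness gives `(R e j - R g j) + (n - 1 - j) d = e j - g j`. Hence once `R g`
is known, knowing `R e j` determines `R e`. For a single inflow, balance forces `R e j = d`; this
yields the Shapley rule on single inflows, then on the profiles `t 𝟙_{l ≥ m}` by lowering `m`,
and finally on profiles constant from agent `j` on, by raising `j`. Conversely the Shapley rule
satisfies the axioms by direct computation.
-/

section Shapley

variable {n : ℕ}

lemma cast_card_Ioi (j : Fin n) : ((#(Ioi j) : ℕ) : ℝ) = n - 1 - j := by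
  rw [Fin.card_Ioi, Nat.sub_sub, Nat.cast_sub (by omega)]
  push_cast
  ring

lemma sub_val_pos (j : Fin n) : 0 < (n : ℝ) - j := by
  have : ((j : ℕ) : ℝ) < n := by exact_mod_cast j.isLt
  linarith

lemma sub_one_sub_val_pos {j : Fin n} (hj : (j : ℕ) < n - 1) : 0 < (n : ℝ) - 1 - j := by
  have : ((j : ℕ) : ℝ) + 1 < n := by exact_mod_cast (by omega : (j : ℕ) + 1 < n)
  linarith

lemma sum_univ_eq_sum_Iio_add_add_sum_Ioi {M : Type*} [AddCommMonoid M] (f : Fin n → M)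
    (j : Fin n) : ∑ l, f l = ∑ l ∈ Iio j, f l + f j + ∑ l ∈ Ioi j, f l := by
  have hsplit : (univ : Finset (Fin n)) = (Iic j).disjUnion (Ioi j)
      (disjoint_left.2 fun l hl hl' => (mem_Ioi.1 hl').not_ge (mem_Iic.1 hl)) := by
    ext l
    simp [le_or_gt]
  rw [hsplit, sum_disjUnion, ← Iio_insert, sum_insert (by simp), add_comm (f j)]

lemma sh_congr {e e' : Fin n → ℝ} {i : Fin n} (h : ∀ l ≤ i, e l = e' l) :
    Sh n e i = Sh n e' i :=
  sum_congr rfl fun l hl => by rw [h l (mem_Iic.1 hl)]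

@[simp]
lemma sh_zero (i : Fin n) : Sh n 0 i = 0 := by
  simp [Sh]

lemma sh_sub {e g : Fin n → ℝ} {j l : Fin n} (hoff : ∀ m ≠ j, e m = g m) (hjl : j ≤ l) :
    Sh n e l - Sh n g l = (e j - g j) / (n - j) := by
  rw [Sh, Sh, ← sum_sub_distrib, sum_eq_single_of_mem j (mem_Iic.2 hjl)]
  · rw [sub_div]
  · intro m _ hm
    rw [hoff m hm, sub_self]

lemma nonneg_single (j : Fin n) {t : ℝ} (ht : 0 ≤ t) : Nonneg n (Pi.single j t) := by
  intro k
  by_cases hk : k = j <;> simp [hk, ht]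

variable {R : (Fin n → ℝ) → (Fin n → ℝ)}

lemma IsRule.apply_zero (hR : IsRule n R) (i : Fin n) : R 0 i = 0 := by
  obtain ⟨hnonneg, -, hsum⟩ := hR 0 fun _ => le_rfl
  simp only [Pi.zero_apply, sum_const_zero] at hsum
  exact (sum_eq_zero_iff_of_nonneg fun l _ => hnonneg l).1 hsum i (mem_univ i)

lemma UpstreamInvariant.apply_eq_of_unilateral (hUI : UpstreamInvariant n R) {e g : Fin n → ℝ}
    (he : Nonneg n e) (hg : Nonneg n g) {j : Fin n} (hoff : ∀ l ≠ j, e l = g l) {k : Fin n}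
    (hkj : k < j) : R e k = R g k := by
  rcases lt_trichotomy (e j) (g j) with hlt | heq | hgt
  · exact hUI e g he hg j hlt hoff k hkj
  · rw [show e = g from funext fun l => if hl : l = j then hl ▸ heq else hoff l hl]
  · exact (hUI g e hg he j hgt (fun l hl => (hoff l hl).symm) k hkj).symm

lemma UpstreamInvariant.apply_eq_of_eq_Iic (hUI : UpstreamInvariant n R) {e e' : Fin n → ℝ}
    (he : Nonneg n e) (he' : Nonneg n e') {k : Fin n} (h : ∀ l ≤ k, e l = e' l) :
    R e k = R e' k := by
  classical
  suffices key : ∀ s : Finset (Fin n), ∀ e : Fin n → ℝ, Nonneg n e →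
      (∀ l ∉ s, e l = e' l) → (∀ l ∈ s, k < l) → R e k = R e' k by
    refine key (Ioi k) e he (fun l hl => h l ?_) fun l hl => mem_Ioi.1 hl
    simpa using hl
  intro s
  induction s using Finset.induction_on with
  | empty =>
    intro e _ hout _
    rw [show e = e' from funext fun l => hout l (notMem_empty l)]
  | insert a s ha ih =>
    intro e he hout hin
    set g := Function.update e a (e' a)
    have hg : Nonneg n g := by
      intro l
      rcases eq_or_ne l a with rfl | hl
      · simpa [g] using he' l
      · simpa [g, hl] using he l
    rw [hUI.apply_eq_of_unilateral he hg (j := a) (fun l hl => by simp [g, hl])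
      (hin a (mem_insert_self a s))]
    refine ih g hg (fun l hl => ?_) fun l hl => hin l (mem_insert_of_mem hl)
    rcases eq_or_ne l a with rfl | hla
    · simp [g]
    · simpa [g, hla] using hout l (by simp [hla, hl])

lemma DownstreamImpartial.sub_eq_sub (hDI : DownstreamImpartial n R) {e g : Fin n → ℝ}
    (he : Nonneg n e) (hg : Nonneg n g) {j : Fin n} (hoff : ∀ l ≠ j, e l = g l)
    (hconst : ∀ k l, j < k → j < l → e k = e l) {k l : Fin n} (hk : j < k) (hl : j < l) :
    R e k - R g k = R e l - R g l := by
  rcases lt_trichotomy (e j) (g j) with hlt | heq | hgt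
  · linarith [hDI e g he hg j hlt hoff hconst k l hk hl]
  · rw [show e = g from funext fun m => if hm : m = j then hm ▸ heq else hoff m hm, sub_self,
      sub_self]
  · refine hDI g e hg he j hgt (fun m hm => (hoff m hm).symm) (fun k' l' hk' hl' => ?_) k l hk hl
    rw [← hoff k' hk'.ne', ← hoff l' hl'.ne']
    exact hconst k' l' hk' hl'

lemma exists_downstream_increment (hR : IsRule n R) (hDI : DownstreamImpartial n R)
    (hUI : UpstreamInvariant n R) {e g : Fin n → ℝ} (he : Nonneg n e) (hg : Nonneg n g)
    {j : Fin n} (hoff : ∀ l ≠ j, e l = g l) (hconst : ∀ k l, j < k → j < l → e k = e l) :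
    ∃ d, (∀ k, j < k → R e k - R g k = d) ∧ R e j - R g j + (n - 1 - j) * d = e j - g j := by
  obtain ⟨d, hd⟩ : ∃ d, ∀ k, j < k → R e k - R g k = d := by
    rcases (Ioi j).eq_empty_or_nonempty with hemp | ⟨l, hl⟩
    · exact ⟨0, fun k hk => absurd (mem_Ioi.2 hk) (by simp [hemp])⟩
    · exact ⟨_, fun k hk => hDI.sub_eq_sub he hg hoff hconst hk (mem_Ioi.1 hl)⟩
  refine ⟨d, hd, ?_⟩
  have htotal : ∑ l, (R e l - R g l) = e j - g j := by
    rw [sum_sub_distrib, (hR e he).2.2, (hR g hg).2.2, ← sum_sub_distrib,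
      sum_eq_single_of_mem j (mem_univ j) fun l _ hl => by rw [hoff l hl, sub_self]]
  have hup : ∑ l ∈ Iio j, (R e l - R g l) = 0 :=
    sum_eq_zero fun l hl => by rw [hUI.apply_eq_of_unilateral he hg hoff (mem_Iio.1 hl), sub_self]
  have hdown : ∑ l ∈ Ioi j, (R e l - R g l) = (n - 1 - j) * d := by
    rw [sum_congr rfl fun l hl => hd l (mem_Ioi.1 hl), sum_const, nsmul_eq_mul, cast_card_Ioi]
  rw [← htotal, sum_univ_eq_sum_Iio_add_add_sum_Ioi, hup, hdown, zero_add]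

lemma eq_sh_of_unilateral (hR : IsRule n R) (hDI : DownstreamImpartial n R)
    (hUI : UpstreamInvariant n R) {e g : Fin n → ℝ} (he : Nonneg n e) (hg : Nonneg n g)
    {j : Fin n} (hoff : ∀ l ≠ j, e l = g l) (hconst : ∀ k l, j < k → j < l → e k = e l)
    (hRg : ∀ l, R g l = Sh n g l) (hRe : R e j = Sh n e j) (l : Fin n) :
    R e l = Sh n e l := by
  obtain ⟨d, hd, hbudget⟩ := exists_downstream_increment hR hDI hUI he hg hoff hconst
  rcases lt_trichotomy l j with hlj | rfl | hjl
  · rw [hUI.apply_eq_of_unilateral he hg hoff hlj, hRg,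
      sh_congr fun m hm => (hoff m (hm.trans_lt hlj).ne).symm]
  · exact hRe
  · rw [hRe, hRg, sh_sub hoff le_rfl] at hbudget
    have hpos := sub_one_sub_val_pos (j := j) (by have := l.isLt; omega)
    have hdval : d = (e j - g j) / (n - j) := by
      refine mul_left_cancel₀ hpos.ne' ?_
      calc ((n : ℝ) - 1 - j) * d = (e j - g j) - (e j - g j) / (n - j) := by linarith
        _ = ((n : ℝ) - 1 - j) * ((e j - g j) / (n - j)) := by
          field_simp [(sub_val_pos j).ne']
          ring
    linarith [hd l hjl, hRg l, sh_sub hoff hjl.le]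

lemma eq_sh_single (hR : IsRule n R) (hDI : DownstreamImpartial n R)
    (hUI : UpstreamInvariant n R) (hB : IsBalanced n R) (j : Fin n) {t : ℝ} (ht : 0 ≤ t)
    (l : Fin n) : R (Pi.single j t) l = Sh n (Pi.single j t) l := by
  rcases ht.eq_or_lt with rfl | htpos
  · simp [hR.apply_zero]
  have he := nonneg_single j ht
  have hoff : ∀ k ≠ j, (Pi.single j t : Fin n → ℝ) k = (0 : Fin n → ℝ) k := fun k hk => by
    simp [hk]
  have hconst : ∀ k l, j < k → j < l →
      (Pi.single j t : Fin n → ℝ) k = (Pi.single j t : Fin n → ℝ) l := fun k l hk hl => by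
    simp [hk.ne', hl.ne']
  have hzero_nonneg : Nonneg n 0 := fun _ => le_rfl
  refine eq_sh_of_unilateral hR hDI hUI he hzero_nonneg hoff hconst
    (fun k => by simp [hR.apply_zero]) ?_ l
  obtain ⟨d, hd, hbudget⟩ := exists_downstream_increment hR hDI hUI he hzero_nonneg hoff hconst
  simp only [hR.apply_zero, sub_zero, Pi.single_eq_same, Pi.zero_apply] at hd hbudget
  have hbalance : ((n : ℝ) - 1 - j) * R (Pi.single j t) j = (n - 1 - j) * d := by
    by_cases hj : (j : ℕ) < n - 1
    · rw [hB _ he j hj (by simpa using htpos) hoff,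
        sum_congr rfl fun k hk => hd k (mem_Ioi.1 hk), sum_const, nsmul_eq_mul, cast_card_Ioi,
        one_div, inv_mul_cancel_left₀ (sub_one_sub_val_pos hj).ne']
    · have : ((j : ℕ) : ℝ) + 1 = n := by exact_mod_cast (by omega : (j : ℕ) + 1 = n)
      simp [show (n : ℝ) - 1 - j = 0 by linarith]
  have hsh := sh_sub (n := n) (g := 0) hoff le_rfl
  simp only [sh_zero, sub_zero, Pi.single_eq_same, Pi.zero_apply] at hsh
  rw [hsh, eq_div_iff (sub_val_pos j).ne']
  linarith

lemma eq_sh_indicator (hR : IsRule n R) (hDI : DownstreamImpartial n R)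
    (hUI : UpstreamInvariant n R) (hB : IsBalanced n R) {t : ℝ} (ht : 0 ≤ t) {m : ℕ}
    (hm : m ≤ n) (l : Fin n) :
    R (fun k : Fin n => if m ≤ (k : ℕ) then t else 0) l
      = Sh n (fun k : Fin n => if m ≤ (k : ℕ) then t else 0) l := by
  have hnonneg : ∀ m', Nonneg n fun k : Fin n => if m' ≤ (k : ℕ) then t else 0 := fun m' k => by
    dsimp only
    split_ifs
    exacts [ht, le_rfl]
  induction hm using Nat.decreasingInduction generalizing l with
  | self =>
    have hzero : (fun k : Fin n => if n ≤ (k : ℕ) then t else 0) = 0 :=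
      funext fun k => if_neg (by omega)
    simp [hzero, hR.apply_zero]
  | of_succ m hmn ih =>
    set M : Fin n := ⟨m, hmn⟩
    have hoff : ∀ k ≠ M, (if m ≤ (k : ℕ) then t else 0) = if m + 1 ≤ (k : ℕ) then t else 0 :=
      fun k hk => by
        have : (k : ℕ) ≠ m := fun h => hk (Fin.ext h)
        split_ifs <;> first | rfl | omega
    have hconst : ∀ k k' : Fin n, M < k → M < k' →
        (if m ≤ (k : ℕ) then t else 0) = if m ≤ (k' : ℕ) then t else 0 := fun k k' hk hk' => by
      rw [if_pos (show m ≤ (k : ℕ) from hk.le), if_pos (show m ≤ (k' : ℕ) from hk'.le)]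
    have hagree : ∀ k ≤ M, (if m ≤ (k : ℕ) then t else 0) = (Pi.single M t : Fin n → ℝ) k := by
      intro k hk
      rcases hk.lt_or_eq with hk | rfl
      · rw [if_neg (show ¬m ≤ (k : ℕ) from not_le.2 hk), Pi.single_eq_of_ne hk.ne]
      · simp [M]
    refine eq_sh_of_unilateral hR hDI hUI (hnonneg m) (hnonneg (m + 1)) hoff hconst ih ?_ l
    rw [hUI.apply_eq_of_eq_Iic (hnonneg m) (nonneg_single M ht) hagree,
      eq_sh_single hR hDI hUI hB M ht, sh_congr fun k hk => (hagree k hk).symm]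

lemma eq_sh_of_const_from (hR : IsRule n R) (hDI : DownstreamImpartial n R)
    (hUI : UpstreamInvariant n R) (hB : IsBalanced n R) (j : ℕ) {e : Fin n → ℝ}
    (he : Nonneg n e) (hconst : ∀ k l : Fin n, j ≤ (k : ℕ) → j ≤ (l : ℕ) → e k = e l)
    (l : Fin n) : R e l = Sh n e l := by
  induction j generalizing e l with
  | zero =>
    have hpos : 0 < n := by have := l.isLt; omega
    have hconst' : e = fun k : Fin n => if 0 ≤ (k : ℕ) then e ⟨0, hpos⟩ else 0 :=
      funext fun k => by rw [if_pos k.val.zero_le]; exact hconst k _ k.val.zero_le le_rfl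
    rw [hconst']
    exact eq_sh_indicator hR hDI hUI hB (he _) n.zero_le l
  | succ j ih =>
    by_cases hjn : j + 1 < n
    · set J : Fin n := ⟨j, by omega⟩
      set g := Function.update e J (e ⟨j + 1, hjn⟩)
      have hg : Nonneg n g := fun k => by
        rcases eq_or_ne k J with rfl | hk
        · simpa [g] using he _
        · simpa [g, hk] using he k
      have hgconst : ∀ k k' : Fin n, j ≤ (k : ℕ) → j ≤ (k' : ℕ) → g k = g k' := by
        have hval : ∀ k : Fin n, j ≤ (k : ℕ) → g k = e ⟨j + 1, hjn⟩ := fun k hk => by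
          rcases eq_or_ne k J with rfl | hkJ
          · simp [g]
          · have : j + 1 ≤ (k : ℕ) := by
              have : (k : ℕ) ≠ j := fun h => hkJ (Fin.ext h)
              omega
            simpa [g, hkJ] using hconst k _ this le_rfl
        intro k k' hk hk'
        rw [hval k hk, hval k' hk']
      set eb : Fin n → ℝ := fun k => if k ≤ J then e k else e J
      have heb : Nonneg n eb := fun k => by
        simp only [eb]
        split_ifs
        exacts [he k, he J]
      have hebconst : ∀ k k' : Fin n, j ≤ (k : ℕ) → j ≤ (k' : ℕ) → eb k = eb k' := by
        have hval : ∀ k : Fin n, j ≤ (k : ℕ) → eb k = e J := fun k hk => by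
          simp only [eb]
          split_ifs with hkJ
          · rw [le_antisymm hkJ hk]
          · rfl
        intro k k' hk hk'
        rw [hval k hk, hval k' hk']
      have hagree : ∀ k ≤ J, e k = eb k := fun k hk => by simp [eb, hk]
      refine eq_sh_of_unilateral hR hDI hUI he hg (j := J) (fun k hk => by simp [g, hk])
        (fun k k' hk hk' => hconst k k' hk hk') (ih hg hgconst) ?_ l
      rw [hUI.apply_eq_of_eq_Iic he heb hagree, ih heb hebconst,
        sh_congr fun k hk => (hagree k hk).symm]
    · refine ih he (fun k k' hk hk' => ?_) l
      rw [Fin.ext (by omega : (k : ℕ) = k')]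

lemma scaleInvariant_of_eq_sh (hSh : ∀ e, Nonneg n e → ∀ i, R e i = Sh n e i) :
    ScaleInvariant n R := by
  intro e he γ hγ i
  rw [hSh _ (fun j => mul_nonneg hγ (he j)), hSh e he, Sh, Sh, mul_sum]
  exact sum_congr rfl fun _ _ => mul_div_assoc _ _ _

lemma downstreamImpartial_of_eq_sh (hSh : ∀ e, Nonneg n e → ∀ i, R e i = Sh n e i) :
    DownstreamImpartial n R := by
  intro e e' he he' i _ hoff _ k l hk hl
  simp only [hSh e he, hSh e' he']
  rw [sh_sub (fun m hm => (hoff m hm).symm) hk.le, sh_sub (fun m hm => (hoff m hm).symm) hl.le]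

lemma upstreamInvariant_of_eq_sh (hSh : ∀ e, Nonneg n e → ∀ i, R e i = Sh n e i) :
    UpstreamInvariant n R := by
  intro e e' he he' i _ hoff k hk
  rw [hSh e he, hSh e' he']
  exact sh_congr fun m hm => hoff m (hm.trans_lt hk).ne

lemma isBalanced_of_eq_sh (hSh : ∀ e, Nonneg n e → ∀ i, R e i = Sh n e i) :
    IsBalanced n R := by
  intro e he i hi _ hoff
  have hdown : ∀ k, i ≤ k → R e k = e i / (n - i) := fun k hk => by
    rw [hSh e he, ← sub_zero (Sh n e k), ← sh_zero (n := n) k, sh_sub (g := 0) hoff hk]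
    simp
  rw [hdown i le_rfl, sum_congr rfl fun k hk => hdown k (mem_Ioi.1 hk).le, sum_const,
    nsmul_eq_mul, cast_card_Ioi, one_div, inv_mul_cancel_left₀ (sub_one_sub_val_pos hi).ne']

end Shapley

theorem shapley_characterization_general (n : ℕ)
    (R : (Fin n → ℝ) → (Fin n → ℝ)) (hR : IsRule n R) :
    (ScaleInvariant n R ∧ DownstreamImpartial n R ∧ UpstreamInvariant n R ∧ IsBalanced n R) ↔
    (∀ e : Fin n → ℝ, Nonneg n e → ∀ i, R e i = Sh n e i) := by
  refine ⟨fun ⟨_, hDI, hUI, hB⟩ e he i => ?_, fun hSh => ?_⟩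
  · exact eq_sh_of_const_from hR hDI hUI hB n he (fun k _ hk _ => absurd k.isLt hk.not_gt) i
  · exact ⟨scaleInvariant_of_eq_sh hSh, downstreamImpartial_of_eq_sh hSh,
      upstreamInvariant_of_eq_sh hSh, isBalanced_of_eq_sh hSh⟩

/-- Theorem 1 in the paper: scale invariance, downstream impartiality,
upstream invariance and balance characterize the Shapley rule. -/
theorem shapley_characterization (n : ℕ) (hn : 0 < n)
    (R : (Fin n → ℝ) → (Fin n → ℝ)) (hR : IsRule n R) :
    (ScaleInvariant n R ∧ DownstreamImpartial n R ∧ UpstreamInvariant n R ∧ IsBalanced n R) ↔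
    (∀ e : Fin n → ℝ, Nonneg n e → ∀ i, R e i = Sh n e i) :=
  shapley_characterization_general n R hR
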